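/- Let k ≥ 2 and let s = (a_1, …, a_j) be a finite sequence of positive integers, j ≥ 1, that occurs in the cycle of gaps Δ(p_k) and satisfies a_1 + ⋯ + a_j < 2·p_{k+1}. Then the counts satisfy the recurrence N(p_{k+1}, s) = (p_{k+1} − (j+1))·N(p_k, s) + Σ_{i=1}^{j} Σ_{x=1}^{a_i − 1} N(p_k, s_{i,x}), where s_{i,x} = (a_1, …, a_{i−1}, x, a_i − x, a_{i+1}, …, a_j) is the sequence obtained from s by splitting the i-th entry a_i into the two consecutive entries x and a_i − x. -/

import Mathlib

/-- `nthPrime k` is the k-th prime `p_k` (1-indexed: `p_1 = 2`). -/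
noncomputable def nthPrime (k : ℕ) : ℕ := Nat.nth Nat.Prime (k - 1)

/-- `primor k` is the primorial `Π_k = p_1 ⋯ p_k`. -/
noncomputable def primor (k : ℕ) : ℕ := ∏ i ∈ Finset.range k, Nat.nth Nat.Prime i

/-- The constellation (list of gaps) `s` occurs at `c` in the cycle of gaps modulo `N`:
the successive partial sums `c, c + a₁, c + a₁ + a₂, …` are all coprime to `N` and no
integer strictly between two consecutive of them is coprime to `N`. -/
def OccursAt (N : ℕ) : List ℕ → ℕ → Prop
  | [], c => Nat.Coprime c N
  | a :: t, c => Nat.Coprime c N ∧ (∀ m : ℕ, c < m → m < c + a → ¬ Nat.Coprime m N) ∧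
      OccursAt N t (c + a)

/-- The constellation `s` occurs (somewhere) in the cycle of gaps modulo `N`. -/
def Occurs (N : ℕ) (s : List ℕ) : Prop := ∃ c : ℕ, 1 ≤ c ∧ OccursAt N s c

/-- `Ncount k s` is `N(p_k, s)`: the number of positions `c` in the fundamental cycle
`[1, Π_k]` at which the constellation `s` occurs in the cycle of gaps `Δ(p_k)`. -/
noncomputable def Ncount (k : ℕ) (s : List ℕ) : ℕ :=
  {c : ℕ | 1 ≤ c ∧ c ≤ primor k ∧ OccursAt (primor k) s c}.ncard

/-!
Write `N = Π_k` and `p = p_{k+1}`, so that `Π_{k+1} = N p`, and lift each position `c ∈ [1, N]`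
to the `p` positions `c + qN`, `q < p`. A number is coprime to `N p` iff it is coprime to `N` and
not divisible by `p`. Numbers coprime to the even `N` are odd and `p` is odd, so in a window of
length `< 2p` the numbers coprime to `N` are pairwise incongruent modulo `p`; in particular at
most one of them is sieved out by `p`. Hence, if `s` occurs at `c` modulo `N`, it occurs at
`c + qN` modulo `N p` unless `p` divides one of its `j + 1` endpoints, which rules out exactly
`j + 1` values of `q`. Otherwise `s` occurs at `c + qN` modulo `N p` iff some split `s_{i,x}`
occurs at `c` modulo `N` and `p` divides its split point, and each such split accounts for
exactly one `q`.
-/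

open Finset

namespace CycleOfGaps

def ends : List ℕ → ℕ → Finset ℕ
  | [], c => {c}
  | a :: t, c => insert c (ends t (c + a))

section Ends

variable {s t : List ℕ} {a c : ℕ}

@[simp] lemma ends_nil : ends [] c = {c} := rfl

@[simp] lemma ends_cons : ends (a :: t) c = insert c (ends t (c + a)) := rfl

lemma self_mem_ends (s : List ℕ) (c : ℕ) : c ∈ ends s c := by
  cases s <;> simp

lemma ends_subset_Icc (s : List ℕ) (c : ℕ) : ends s c ⊆ Icc c (c + s.sum) := by
  induction s generalizing c with
  | nil => simp
  | cons a t ih =>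
    intro m hm
    rcases mem_insert.1 hm with rfl | hm
    · simp
    · have := mem_Icc.1 (ih (c + a) hm)
      simp only [List.sum_cons, mem_Icc]
      omega

lemma ends_add (s : List ℕ) (c d : ℕ) : ends s (c + d) = (ends s c).image (· + d) := by
  induction s generalizing c with
  | nil => simp
  | cons a t ih => rw [ends_cons, ends_cons, add_right_comm, ih, image_insert]

lemma card_ends (hpos : ∀ a ∈ s, 0 < a) (c : ℕ) : #(ends s c) = s.length + 1 := by
  induction s generalizing c with
  | nil => simp
  | cons a t ih =>
    have hc : c ∉ ends t (c + a) := fun h => by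
      have := (mem_Icc.1 (ends_subset_Icc t _ h)).1
      have := hpos a (by simp)
      omega
    rw [ends_cons, card_insert_of_notMem hc, ih (fun b hb => hpos b (by simp [hb])),
      List.length_cons]

lemma occursAt_iff {M : ℕ} :
    OccursAt M s c ↔ ∀ m ∈ Icc c (c + s.sum), (m.Coprime M ↔ m ∈ ends s c) := by
  induction s generalizing c with
  | nil =>
    constructor
    · intro h m hm
      obtain rfl : m = c := by simp at hm; omega
      simpa [OccursAt] using h
    · intro h
      simpa [OccursAt] using h c (by simp)
  | cons a t ih =>
    have hlow : ∀ m ∈ ends t (c + a), c + a ≤ m := fun m hm =>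
      (mem_Icc.1 (ends_subset_Icc t _ hm)).1
    simp only [OccursAt, ih, ends_cons, mem_insert, List.sum_cons, mem_Icc]
    constructor
    · rintro ⟨hcop, hgap, htail⟩ m ⟨h1, h2⟩
      rcases eq_or_lt_of_le h1 with rfl | h1
      · simpa using hcop
      rcases lt_or_ge m (c + a) with h3 | h3
      · refine iff_of_false (hgap m h1 h3) ?_
        rintro (rfl | hm)
        · omega
        · have := hlow m hm; omega
      · rw [htail m ⟨h3, by omega⟩]
        simp [h1.ne']
    · intro h
      refine ⟨(h c ⟨le_rfl, by omega⟩).2 (Or.inl rfl), fun m h1 h2 hm => ?_,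
        fun m ⟨h1, h2⟩ => ?_⟩
      · rcases (h m ⟨h1.le, by omega⟩).1 hm with rfl | hm
        · omega
        · have := hlow m hm; omega
      · rw [h m ⟨by omega, by omega⟩]
        refine ⟨?_, Or.inr⟩
        rintro (rfl | hm)
        · obtain rfl : a = 0 := by omega
          simpa using self_mem_ends t m
        · exact hm

lemma coprime_of_mem_ends {M e : ℕ} (h : OccursAt M s c) (he : e ∈ ends s c) : e.Coprime M :=
  (occursAt_iff.1 h e (ends_subset_Icc s c he)).2 he

lemma occursAt_add_mul_iff {M : ℕ} (s : List ℕ) (c q : ℕ) :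
    OccursAt M s (c + q * M) ↔ OccursAt M s c := by
  induction s generalizing c with
  | nil => exact Nat.coprime_add_mul_right_left c M q
  | cons a t ih =>
    rw [OccursAt, OccursAt, Nat.coprime_add_mul_right_left, add_right_comm, ih]
    refine and_congr_right' (and_congr_left' ⟨fun h m h1 h2 => ?_, fun h m h1 h2 => ?_⟩)
    · simpa [Nat.coprime_add_mul_right_left] using h (m + q * M) (by omega) (by omega)
    · obtain ⟨m, rfl⟩ : ∃ m', m = m' + q * M := ⟨m - q * M, by omega⟩
      simpa [Nat.coprime_add_mul_right_left] using h m (by omega) (by omega)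

end Ends

/-- The paper's `s_{i,x}`. The index is a plain `ℕ`; the hypotheses `0 < x < s.getD i 0` used
below force `i < s.length`. -/
def splitGap (s : List ℕ) (i x : ℕ) : List ℕ :=
  s.take i ++ [x, s.getD i 0 - x] ++ s.drop (i + 1)

section SplitGap

variable {s t : List ℕ} {a c i x m : ℕ}

@[simp] lemma splitGap_cons_zero : splitGap (a :: t) 0 x = x :: (a - x) :: t := by
  simp [splitGap]

@[simp] lemma splitGap_cons_succ : splitGap (a :: t) (i + 1) x = a :: splitGap t i x := by
  simp [splitGap]

lemma sum_splitGap (hx : x ≤ s.getD i 0) : (splitGap s i x).sum = s.sum := by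
  induction s generalizing i with
  | nil => simp_all [splitGap]
  | cons a t ih =>
    cases i with
    | zero => simp at hx ⊢; omega
    | succ i => simp [ih (by simpa using hx)]

lemma ends_splitGap (hx : x ≤ s.getD i 0) :
    ends (splitGap s i x) c = insert (c + (s.take i).sum + x) (ends s c) := by
  induction s generalizing i c with
  | nil => simp_all [splitGap]
  | cons a t ih =>
    cases i with
    | zero =>
      simp only [List.getD_cons_zero] at hx
      simp [Nat.add_sub_cancel' hx, add_assoc, insert_comm]
    | succ i =>
      simp [ih (by simpa using hx), add_assoc, insert_comm]

lemma add_sum_take_add_notMem_ends (hx0 : 0 < x) (hx : x < s.getD i 0) :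
    c + (s.take i).sum + x ∉ ends s c := by
  induction s generalizing i c with
  | nil => simp at hx
  | cons a t ih =>
    cases i with
    | zero =>
      simp only [List.getD_cons_zero] at hx
      simp only [List.take_zero, List.sum_nil, add_zero, ends_cons, mem_insert, not_or]
      exact ⟨by omega, fun h => by have := (mem_Icc.1 (ends_subset_Icc t _ h)).1; omega⟩
    | succ i =>
      simp only [List.getD_cons_succ] at hx
      have := ih (c := c + a) hx
      simp only [List.take_succ_cons, List.sum_cons, ends_cons, mem_insert, not_or]
      exact ⟨by omega, by rwa [← add_assoc]⟩

lemma add_sum_take_add_mem_Icc (hx : x ≤ s.getD i 0) :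
    c + (s.take i).sum + x ∈ Icc c (c + s.sum) := by
  have := ends_subset_Icc (splitGap s i x) c (by rw [ends_splitGap hx]; exact mem_insert_self _ _)
  rwa [sum_splitGap hx] at this

lemma exists_eq_add_sum_take_add (hm : m ∈ Icc c (c + s.sum)) (hmE : m ∉ ends s c) :
    ∃ i x, 0 < x ∧ x < s.getD i 0 ∧ m = c + (s.take i).sum + x := by
  induction s generalizing c with
  | nil => simp_all
  | cons a t ih =>
    simp only [ends_cons, mem_insert, not_or] at hmE
    simp only [List.sum_cons, mem_Icc] at hm
    by_cases hma : m < c + a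
    · exact ⟨0, m - c, by omega, by simp; omega, by simp; omega⟩
    · obtain ⟨i, x, hx0, hx, rfl⟩ := ih (c := c + a) (by simp; omega) hmE.2
      exact ⟨i + 1, x, hx0, by simpa using hx, by simp; omega⟩

lemma sum_take_add_inj {i' x' : ℕ} (hx0 : 0 < x) (hx : x < s.getD i 0) (hx0' : 0 < x')
    (hx' : x' < s.getD i' 0) (h : (s.take i).sum + x = (s.take i').sum + x') :
    i = i' ∧ x = x' := by
  induction s generalizing i i' with
  | nil => simp at hx
  | cons a t ih =>
    cases i <;> cases i' <;> simp at hx hx' h ⊢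
    · omega
    · omega
    · omega
    · exact ih hx hx' (by omega)

end SplitGap

lemma eq_of_modEq_of_odd {p m m' : ℕ} (hp : Odd p) (hm : Odd m) (hm' : Odd m')
    (h₁ : m < m' + 2 * p) (h₂ : m' < m + 2 * p) (h : m ≡ m' [MOD p]) : m = m' := by
  wlog hle : m ≤ m' generalizing m m'
  · exact (this hm' hm h₂ h₁ h.symm (by omega)).symm
  obtain ⟨u, hu⟩ := (Nat.modEq_iff_dvd' hle).1 h
  have hu2 : u < 2 := by
    by_contra! hu2
    have := Nat.mul_le_mul_left p hu2
    omega
  obtain ⟨b, rfl⟩ := hp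
  obtain ⟨a, rfl⟩ := hm
  obtain ⟨a', rfl⟩ := hm'
  interval_cases u <;> omega

section Transfer

variable {N p S c m m' : ℕ}

lemma eq_of_modEq_of_mem_Icc (hN : Even N) (hp : Odd p) (hS : S < 2 * p)
    (hm : m ∈ Icc c (c + S)) (hm' : m' ∈ Icc c (c + S)) (hcm : m.Coprime N)
    (hcm' : m'.Coprime N) (h : m ≡ m' [MOD p]) : m = m' := by
  rw [mem_Icc] at hm hm'
  exact eq_of_modEq_of_odd hp (hcm.coprime_dvd_right hN.two_dvd).odd_of_right
    (hcm'.coprime_dvd_right hN.two_dvd).odd_of_right (by omega) (by omega) h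

lemma coprime_mul_prime_iff (hp : p.Prime) : m.Coprime (N * p) ↔ m.Coprime N ∧ ¬ p ∣ m := by
  rw [Nat.coprime_mul_iff_right, Nat.coprime_comm (m := p), hp.coprime_iff_not_dvd]

variable {s : List ℕ} {C i x : ℕ}

lemma occursAt_mul_iff_of_occursAt (hp : p.Prime) (h : OccursAt N s C) :
    OccursAt (N * p) s C ↔ ∀ e ∈ ends s C, ¬ p ∣ e := by
  rw [occursAt_iff] at h ⊢
  constructor
  · intro h' e he
    exact ((coprime_mul_prime_iff hp).1 ((h' e (ends_subset_Icc s C he)).2 he)).2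
  · intro h' m hm
    rw [coprime_mul_prime_iff hp, h m hm]
    exact ⟨And.left, fun he => ⟨he, h' m he⟩⟩

lemma coprime_of_occursAt_splitGap (hx : x ≤ s.getD i 0) (h : OccursAt N (splitGap s i x) C) :
    (C + (s.take i).sum + x).Coprime N :=
  coprime_of_mem_ends h (by rw [ends_splitGap hx]; exact mem_insert_self _ _)

lemma not_occursAt_of_occursAt_splitGap (hx0 : 0 < x) (hx : x < s.getD i 0)
    (h : OccursAt N (splitGap s i x) C) : ¬ OccursAt N s C := fun hs =>
  add_sum_take_add_notMem_ends hx0 hx <|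
    (occursAt_iff.1 hs _ (add_sum_take_add_mem_Icc hx.le)).1 (coprime_of_occursAt_splitGap hx.le h)

lemma occursAt_mul_of_occursAt_splitGap (hN : Even N) (hp : p.Prime) (hpo : Odd p)
    (hS : s.sum < 2 * p) (hx0 : 0 < x) (hx : x < s.getD i 0)
    (h : OccursAt N (splitGap s i x) C) (hw : p ∣ C + (s.take i).sum + x) :
    OccursAt (N * p) s C := by
  have hwW := add_sum_take_add_mem_Icc (c := C) hx.le
  have hwc := coprime_of_occursAt_splitGap hx.le h
  rw [occursAt_iff, sum_splitGap hx.le, ends_splitGap hx.le] at h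
  rw [occursAt_iff]
  intro m hm
  rw [coprime_mul_prime_iff hp, h m hm, mem_insert]
  constructor
  · rintro ⟨rfl | hmE, hpm⟩
    · exact absurd hw hpm
    · exact hmE
  · refine fun hmE => ⟨Or.inr hmE, fun hpm => add_sum_take_add_notMem_ends (c := C) hx0 hx ?_⟩
    rwa [← eq_of_modEq_of_mem_Icc hN hpo hS hm hwW ((h m hm).2 (mem_insert_of_mem hmE)) hwc
      ((Nat.modEq_zero_iff_dvd.2 hpm).trans (Nat.modEq_zero_iff_dvd.2 hw).symm)]

lemma exists_occursAt_splitGap (hN : Even N) (hp : p.Prime) (hpo : Odd p) (hS : s.sum < 2 * p)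
    (h : OccursAt (N * p) s C) (hC : ¬ OccursAt N s C) :
    ∃ i x, 0 < x ∧ x < s.getD i 0 ∧ OccursAt N (splitGap s i x) C ∧
      p ∣ C + (s.take i).sum + x := by
  have hEcop : ∀ m ∈ Icc C (C + s.sum), m.Coprime N ∧ ¬ p ∣ m ↔ m ∈ ends s C := by
    simpa only [coprime_mul_prime_iff hp] using occursAt_iff.1 h
  obtain ⟨m, hm, hmc, hmE⟩ : ∃ m ∈ Icc C (C + s.sum), m.Coprime N ∧ m ∉ ends s C := by
    by_contra! hcon
    exact hC (occursAt_iff.2 fun m hm => ⟨hcon m hm, fun hmE => ((hEcop m hm).2 hmE).1⟩)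
  have hpm : p ∣ m := by
    by_contra hpm
    exact hmE ((hEcop m hm).1 ⟨hmc, hpm⟩)
  obtain ⟨i, x, hx0, hx, rfl⟩ := exists_eq_add_sum_take_add hm hmE
  refine ⟨i, x, hx0, hx, ?_, hpm⟩
  rw [occursAt_iff, sum_splitGap hx.le, ends_splitGap hx.le]
  intro m' hm'
  rw [mem_insert]
  constructor
  · intro hm'c
    by_cases hpm' : p ∣ m'
    · exact Or.inl (eq_of_modEq_of_mem_Icc hN hpo hS hm' hm hm'c hmc
        ((Nat.modEq_zero_iff_dvd.2 hpm').trans (Nat.modEq_zero_iff_dvd.2 hpm).symm))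
    · exact Or.inr ((hEcop m' hm').1 ⟨hm'c, hpm'⟩)
  · rintro (rfl | hm'E)
    · exact hmc
    · exact ((hEcop m' hm').2 hm'E).1

lemma eq_of_occursAt_splitGap (hN : Even N) (hpo : Odd p) (hS : s.sum < 2 * p) {i' x' : ℕ}
    (hx0 : 0 < x) (hx : x < s.getD i 0) (hx0' : 0 < x') (hx' : x' < s.getD i' 0)
    (h : OccursAt N (splitGap s i x) C) (hw : p ∣ C + (s.take i).sum + x)
    (h' : OccursAt N (splitGap s i' x') C) (hw' : p ∣ C + (s.take i').sum + x') :
    i = i' ∧ x = x' := by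
  have := eq_of_modEq_of_mem_Icc hN hpo hS (add_sum_take_add_mem_Icc hx.le)
    (add_sum_take_add_mem_Icc hx'.le) (coprime_of_occursAt_splitGap hx.le h)
    (coprime_of_occursAt_splitGap hx'.le h')
    ((Nat.modEq_zero_iff_dvd.2 hw).trans (Nat.modEq_zero_iff_dvd.2 hw').symm)
  exact sum_take_add_inj hx0 hx hx0' hx' (by omega)

end Transfer

section Residues

variable {p N : ℕ}

lemma card_filter_range_natCast_mem [NeZero p] (T : Finset (ZMod p)) :
    #{q ∈ range p | ((q : ℕ) : ZMod p) ∈ T} = #T := by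
  have : {q ∈ range p | ((q : ℕ) : ZMod p) ∈ T} = T.image ZMod.val := by
    ext q
    simp only [mem_filter, mem_range, mem_image]
    constructor
    · rintro ⟨hq, hqT⟩
      exact ⟨q, hqT, ZMod.val_cast_of_lt hq⟩
    · rintro ⟨t, ht, rfl⟩
      exact ⟨ZMod.val_lt t, by rwa [ZMod.natCast_zmod_val]⟩
  rw [this, card_image_of_injective _ (ZMod.val_injective p)]

lemma dvd_add_mul_iff [Fact p.Prime] (hN : ¬ p ∣ N) (a q : ℕ) :
    p ∣ a + q * N ↔ (q : ZMod p) = -a / N := by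
  have hN' : (N : ZMod p) ≠ 0 := by rwa [Ne, ZMod.natCast_eq_zero_iff]
  rw [← ZMod.natCast_eq_zero_iff, eq_div_iff hN']
  push_cast
  constructor <;> intro h <;> linear_combination h

lemma card_filter_range_dvd_add_mul (hp : p.Prime) (hN : ¬ p ∣ N) (a : ℕ) :
    #{q ∈ range p | p ∣ a + q * N} = 1 := by
  have := Fact.mk hp
  calc #{q ∈ range p | p ∣ a + q * N}
      = #{q ∈ range p | ((q : ℕ) : ZMod p) ∈ ({-(a : ZMod p) / N} : Finset (ZMod p))} := by
        congr 1
        exact filter_congr fun q _ => by rw [dvd_add_mul_iff hN, mem_singleton]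
    _ = 1 := by rw [card_filter_range_natCast_mem, card_singleton]

lemma card_filter_range_forall_not_dvd (hp : p.Prime) (hN : ¬ p ∣ N) (E : Finset ℕ)
    (hE : Set.InjOn (Nat.cast : ℕ → ZMod p) E) :
    #{q ∈ range p | ∀ e ∈ E, ¬ p ∣ e + q * N} = p - #E := by
  have := Fact.mk hp
  have hN' : (N : ZMod p) ≠ 0 := by rwa [Ne, ZMod.natCast_eq_zero_iff]
  set T := E.image fun e : ℕ => -(e : ZMod p) / N
  have hT : #T = #E := card_image_of_injOn fun e he e' he' h =>
    hE he he' (by simpa [div_left_inj' hN'] using h)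
  have : {q ∈ range p | ∀ e ∈ E, ¬ p ∣ e + q * N} =
      range p \ {q ∈ range p | ((q : ℕ) : ZMod p) ∈ T} := by
    ext q
    simp only [T, mem_filter, mem_sdiff, mem_range, mem_image, dvd_add_mul_iff hN, eq_comm,
      not_exists, not_and]
    tauto
  rw [this, card_sdiff_of_subset (filter_subset _ _), card_range, card_filter_range_natCast_mem, hT]

end Residues

lemma sum_range_mul {M : Type*} [AddCommMonoid M] (f : ℕ → M) (N p : ℕ) :
    ∑ C ∈ range (N * p), f C = ∑ c ∈ range N, ∑ q ∈ range p, f (c + q * N) := by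
  induction p with
  | zero => simp
  | succ p ih =>
    simp only [Nat.mul_succ, sum_range_add, ih, sum_range_succ, sum_add_distrib]
    congr 1
    exact sum_congr rfl fun c _ => by rw [add_comm, mul_comm]

lemma sum_Icc_one_mul {M : Type*} [AddCommMonoid M] (f : ℕ → M) (N p : ℕ) :
    ∑ C ∈ Icc 1 (N * p), f C = ∑ c ∈ Icc 1 N, ∑ q ∈ range p, f (c + q * N) := by
  have h (n : ℕ) (g : ℕ → M) : ∑ C ∈ Icc 1 n, g C = ∑ C ∈ range n, g (1 + C) := by
    rw [← Ico_add_one_right_eq_Icc, sum_Ico_eq_sum_range, Nat.add_sub_cancel]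
  simp only [h, sum_range_mul, add_assoc]

section Counting

open Classical

variable {N p : ℕ} {s : List ℕ}

lemma sum_sum_ite_occursAt_splitGap (hN : Even N) (hp : p.Prime) (hpo : Odd p)
    (hS : s.sum < 2 * p) {C : ℕ} (hC : ¬ OccursAt N s C) :
    ∑ i : Fin s.length, ∑ x ∈ Ico 1 (s.get i),
        (if OccursAt N (splitGap s i x) C ∧ p ∣ C + (s.take i).sum + x then 1 else 0) =
      if OccursAt (N * p) s C then 1 else 0 := by
  rw [sum_sigma', sum_boole, Nat.cast_id]
  split_ifs with h
  · obtain ⟨i, x, hx0, hx, hocc, hw⟩ := exists_occursAt_splitGap hN hp hpo hS h hC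
    have hi : i < s.length := by
      by_contra! hi
      simp [List.getElem?_eq_none hi] at hx
    rw [card_eq_one]
    refine ⟨⟨⟨i, hi⟩, x⟩, ?_⟩
    ext ⟨i', x'⟩
    simp only [mem_filter, mem_sigma, mem_univ, mem_Ico, true_and, mem_singleton, Sigma.mk.injEq,
      heq_eq_eq, List.get_eq_getElem, ← List.getD_eq_getElem _ 0 i'.2]
    constructor
    · rintro ⟨⟨hx0', hx'⟩, hocc', hw'⟩
      obtain ⟨hii, rfl⟩ := eq_of_occursAt_splitGap hN hpo hS hx0' hx' hx0 hx hocc' hw' hocc hw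
      exact ⟨Fin.ext hii, rfl⟩
    · rintro ⟨rfl, rfl⟩
      exact ⟨⟨hx0, hx⟩, hocc, hw⟩
  · rw [card_eq_zero, filter_eq_empty_iff]
    rintro ⟨i, x⟩ hix ⟨hocc, hw⟩
    simp only [mem_sigma, mem_univ, mem_Ico, true_and, List.get_eq_getElem,
      ← List.getD_eq_getElem _ 0 i.2] at hix
    exact h (occursAt_mul_of_occursAt_splitGap hN hp hpo hS hix.1 hix.2 hocc hw)

lemma sum_range_ite_occursAt_mul_of_occursAt (hN : Even N) (hp : p.Prime) (hpo : Odd p)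
    (hpN : ¬ p ∣ N) (hpos : ∀ a ∈ s, 0 < a) (hS : s.sum < 2 * p) {c : ℕ}
    (hc : OccursAt N s c) :
    ∑ q ∈ range p, (if OccursAt (N * p) s (c + q * N) then 1 else 0) =
      p - (s.length + 1) := by
  have hq (q : ℕ) :
      OccursAt (N * p) s (c + q * N) ↔ ∀ e ∈ ends s c, ¬ p ∣ e + q * N := by
    rw [occursAt_mul_iff_of_occursAt hp ((occursAt_add_mul_iff s c q).2 hc), ends_add,
      forall_mem_image]
  have hE : Set.InjOn (Nat.cast : ℕ → ZMod p) (ends s c) := fun e he e' he' h =>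
    eq_of_modEq_of_mem_Icc hN hpo hS (ends_subset_Icc s c he) (ends_subset_Icc s c he')
      (coprime_of_mem_ends hc he) (coprime_of_mem_ends hc he')
      ((ZMod.natCast_eq_natCast_iff _ _ _).1 h)
  rw [sum_boole, Nat.cast_id, filter_congr fun q _ => hq q,
    card_filter_range_forall_not_dvd hp hpN _ hE, card_ends hpos]

lemma sum_range_ite_occursAt_mul_of_not_occursAt (hN : Even N) (hp : p.Prime) (hpo : Odd p)
    (hpN : ¬ p ∣ N) (hS : s.sum < 2 * p) {c : ℕ} (hc : ¬ OccursAt N s c) :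
    ∑ q ∈ range p, (if OccursAt (N * p) s (c + q * N) then 1 else 0) =
      ∑ i : Fin s.length, ∑ x ∈ Ico 1 (s.get i),
        if OccursAt N (splitGap s i x) c then 1 else 0 := by
  calc ∑ q ∈ range p, (if OccursAt (N * p) s (c + q * N) then 1 else 0)
      = ∑ q ∈ range p, ∑ i : Fin s.length, ∑ x ∈ Ico 1 (s.get i),
          if OccursAt N (splitGap s i x) c ∧ p ∣ c + (s.take i).sum + x + q * N then 1
          else 0 := by
        refine sum_congr rfl fun q _ => ?_
        rw [← sum_sum_ite_occursAt_splitGap hN hp hpo hS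
          (mt (occursAt_add_mul_iff s c q).1 hc)]
        simp only [occursAt_add_mul_iff, add_right_comm _ (q * N)]
    _ = ∑ i : Fin s.length, ∑ x ∈ Ico 1 (s.get i), ∑ q ∈ range p,
          if OccursAt N (splitGap s i x) c ∧ p ∣ c + (s.take i).sum + x + q * N then 1
          else 0 := by
        rw [sum_comm]
        exact sum_congr rfl fun i _ => sum_comm
    _ = ∑ i : Fin s.length, ∑ x ∈ Ico 1 (s.get i),
          if OccursAt N (splitGap s i x) c then 1 else 0 := by
        refine sum_congr rfl fun i _ => sum_congr rfl fun x _ => ?_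
        by_cases h : OccursAt N (splitGap s i x) c
        · simp [h, card_filter_range_dvd_add_mul hp hpN]
        · simp [h]

lemma sum_range_ite_occursAt_mul (hN : Even N) (hp : p.Prime) (hpo : Odd p) (hpN : ¬ p ∣ N)
    (hpos : ∀ a ∈ s, 0 < a) (hS : s.sum < 2 * p) (c : ℕ) :
    ∑ q ∈ range p, (if OccursAt (N * p) s (c + q * N) then 1 else 0) =
      (if OccursAt N s c then p - (s.length + 1) else 0) +
        ∑ i : Fin s.length, ∑ x ∈ Ico 1 (s.get i),
          if OccursAt N (splitGap s i x) c then 1 else 0 := by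
  by_cases hc : OccursAt N s c
  · have hsplit (i : Fin s.length) (x : ℕ) (hx : x ∈ Ico 1 (s.get i)) :
        ¬ OccursAt N (splitGap s i x) c := fun h => by
      rw [mem_Ico, List.get_eq_getElem, ← List.getD_eq_getElem _ 0 i.2] at hx
      exact not_occursAt_of_occursAt_splitGap hx.1 hx.2 h hc
    rw [sum_range_ite_occursAt_mul_of_occursAt hN hp hpo hpN hpos hS hc, if_pos hc,
      left_eq_add]
    exact sum_eq_zero fun i _ => sum_eq_zero fun x hx => if_neg (hsplit i x hx)
  · rw [sum_range_ite_occursAt_mul_of_not_occursAt hN hp hpo hpN hS hc, if_neg hc, zero_add]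

lemma ncount_eq_sum (k : ℕ) (s : List ℕ) :
    Ncount k s = ∑ c ∈ Icc 1 (primor k), if OccursAt (primor k) s c then 1 else 0 := by
  rw [sum_boole, Nat.cast_id, Ncount, ← Set.ncard_coe_finset]
  congr 1
  ext c
  simp [and_assoc]

end Counting

lemma primor_succ (k : ℕ) : primor (k + 1) = primor k * nthPrime (k + 1) :=
  prod_range_succ _ k

lemma even_primor {k : ℕ} (hk : 1 ≤ k) : Even (primor k) := by
  rw [even_iff_two_dvd, ← Nat.nth_prime_zero_eq_two]
  exact dvd_prod_of_mem _ (mem_range.2 hk)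

lemma prime_nthPrime (k : ℕ) : (nthPrime k).Prime :=
  Nat.prime_nth_prime _

lemma odd_nthPrime {k : ℕ} (hk : 2 ≤ k) : Odd (nthPrime k) := by
  refine (prime_nthPrime k).odd_of_ne_two fun h => ?_
  rw [nthPrime, ← Nat.nth_prime_zero_eq_two] at h
  have := Nat.nth_injective Nat.infinite_setOfPred_prime h
  omega

lemma nthPrime_succ_not_dvd_primor (k : ℕ) : ¬ nthPrime (k + 1) ∣ primor k := by
  intro h
  obtain ⟨i, hi, hdvd⟩ := ((prime_nthPrime (k + 1)).prime.dvd_finsetProd_iff _).1 h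
  have := Nat.nth_injective Nat.infinite_setOfPred_prime
    ((Nat.prime_dvd_prime_iff_eq (prime_nthPrime (k + 1)) (Nat.prime_nth_prime i)).1 hdvd)
  simp only [mem_range] at hi
  omega

end CycleOfGaps

open CycleOfGaps in
theorem stmt_14_general (k : ℕ) (hk : 2 ≤ k) (s : List ℕ)
    (hpos : ∀ a ∈ s, 0 < a)
    (hsum : s.sum < 2 * nthPrime (k + 1)) :
    Ncount (k + 1) s =
      (nthPrime (k + 1) - (s.length + 1)) * Ncount k s +
        ∑ i : Fin s.length, ∑ x ∈ Finset.Ico 1 (s.get i),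
          Ncount k (s.take i.val ++ [x, s.get i - x] ++ s.drop (i.val + 1)) := by
  classical
  have hsplit (i : Fin s.length) (x : ℕ) :
      s.take i.val ++ [x, s.get i - x] ++ s.drop (i.val + 1) = splitGap s i x := by
    simp [splitGap]
  simp only [hsplit, ncount_eq_sum, primor_succ, sum_Icc_one_mul,
    sum_range_ite_occursAt_mul (even_primor (by omega)) (prime_nthPrime _)
      (odd_nthPrime (by omega)) (nthPrime_succ_not_dvd_primor k) hpos hsum, sum_add_distrib]
  congr 1
  · rw [mul_sum]
    exact sum_congr rfl fun c _ => by split_ifs <;> simp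
  · rw [sum_comm]
    exact sum_congr rfl fun i _ => sum_comm

theorem stmt_14 (k : ℕ) (hk : 2 ≤ k) (s : List ℕ) (hj : 1 ≤ s.length)
    (hpos : ∀ a ∈ s, 0 < a) (hocc : Occurs (primor k) s)
    (hsum : s.sum < 2 * nthPrime (k + 1)) :
    Ncount (k + 1) s =
      (nthPrime (k + 1) - (s.length + 1)) * Ncount k s +
        ∑ i : Fin s.length, ∑ x ∈ Finset.Ico 1 (s.get i),
          Ncount k (s.take i.val ++ [x, s.get i - x] ++ s.drop (i.val + 1)) :=
  stmt_14_general k hk s hpos hsum
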